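/- arXiv:2110.08359 — 2 statements merged into one kernel-verified Lean document; each statement's English description precedes it below -/
import Mathlib

section
/- Let ℓ, u ∈ ℝⁿ with ℓ < u componentwise, let B = {v ∈ ℝⁿ : ℓ < v < u} (componentwise), and let M : ℝⁿ → ℝ be continuously differentiable on B. Let v_0 ∈ B be such that the level set L = {v ∈ B : M(v) ≤ M(v_0)} is a compact subset of B. Fix σ ∈ (0,1), 0 < η_A < η_W < 1, and θ > 0. Suppose the sequences (v_k) ⊂ B and (Δv_k) ⊂ ℝⁿ satisfy: ∇M(v_k)ᵀΔv_k < 0 and ‖Δv_k‖ ≤ θ for all k; and v_{k+1} = proj_{Ω_k}(v_k + α_k Δv_k), where Ω_k = {v : v_k − σ(v_k − ℓ) ≤ v ≤ v_k + σ(u − v_k)}, proj_{Ω_k} is the componentwise projection onto Ω_k, and α_k is a quasi-Wolfe step for the path v_k(α) = proj_{Ω_k}(v_k + αΔv_k) and function ψ_k(α) = M(v_k(α)), with one-sided derivatives defined via the projected directions relative to the box Ω_k. Then lim_{k→∞} |∇M(v_k)ᵀΔv_k| = 0. -/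
open scoped Classical

noncomputable section

/-- Componentwise projection onto the box `[l, u]`. -/
def boxProj {n : ℕ} (l u : Fin n → ℝ) (x : Fin n → ℝ) : Fin n → ℝ :=
  fun i => if x i < l i then l i else if u i < x i then u i else x i

/-- The projected direction `P_y(p)` of `p` at `y`. -/
def projDir {n : ℕ} (l u : Fin n → ℝ) (y p : Fin n → ℝ) : Fin n → ℝ :=
  fun i => if (y i = l i ∧ p i < 0) ∨ (y i = u i ∧ 0 < p i) then 0 else p i

/-- The projected path `α ↦ proj_Ω(x + α p)`. -/
def boxPath {n : ℕ} (l u x p : Fin n → ℝ) (α : ℝ) : Fin n → ℝ :=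
  boxProj l u (fun i => x i + α * p i)

/-- `α` is a kink step with respect to index `i`. -/
def IsKink {n : ℕ} (l u x p : Fin n → ℝ) (α : ℝ) (i : Fin n) : Prop :=
  (x i + α * p i = l i ∧ p i < 0) ∨ (x i + α * p i = u i ∧ 0 < p i)

/-- The vector `P⁻_{x(α)}(p)`. -/
def projDirMinus {n : ℕ} (l u x p : Fin n → ℝ) (α : ℝ) : Fin n → ℝ :=
  fun i => if IsKink l u x p α i then p i else projDir l u (boxPath l u x p α) p i

/-- The right derivative `ψ'₊(α) = ∇f(x(α))ᵀ P_{x(α)}(p)`. -/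
def psiDp {n : ℕ} (f : (Fin n → ℝ) → ℝ) (l u x p : Fin n → ℝ) (α : ℝ) : ℝ :=
  fderiv ℝ f (boxPath l u x p α) (projDir l u (boxPath l u x p α) p)

/-- The left derivative `ψ'₋(α) = ∇f(x(α))ᵀ P⁻_{x(α)}(p)`. -/
def psiDm {n : ℕ} (f : (Fin n → ℝ) → ℝ) (l u x p : Fin n → ℝ) (α : ℝ) : ℝ :=
  fderiv ℝ f (boxPath l u x p α) (projDirMinus l u x p α)

/-- `α` is a quasi-Wolfe step for the path `α ↦ proj_Ω(x + α p)`. -/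
def QuasiWolfeStep {n : ℕ} (f : (Fin n → ℝ) → ℝ) (l u x p : Fin n → ℝ)
    (ηA ηW α : ℝ) : Prop :=
  0 < α ∧
  f (boxPath l u x p α) ≤ f (boxPath l u x p 0) + α * ηA * psiDp f l u x p 0 ∧
  (|psiDm f l u x p α| ≤ ηW * |psiDp f l u x p 0| ∨
   |psiDp f l u x p α| ≤ ηW * |psiDp f l u x p 0| ∨
   (psiDm f l u x p α ≠ psiDp f l u x p α ∧
     psiDm f l u x p α ≤ 0 ∧ 0 ≤ psiDp f l u x p α))

/-- The `i`-th component of the gradient of `f` at `y`. -/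
def gradComp {n : ℕ} (f : (Fin n → ℝ) → ℝ) (y : Fin n → ℝ) (i : Fin n) : ℝ :=
  fderiv ℝ f y (Pi.single i 1)

/-- Membership of `i` in the working set at `y` with parameter `ε`. -/
def InWS {n : ℕ} (f : (Fin n → ℝ) → ℝ) (l u y : Fin n → ℝ) (ε : ℝ) (i : Fin n) : Prop :=
  (y i ≤ l i + ε ∧ 0 < gradComp f y i) ∨ (u i - ε ≤ y i ∧ gradComp f y i < 0)

/-- The norm `‖Πᵀ∇f(y)‖` of the gradient projected off the working set. -/
def projGradNorm {n : ℕ} (f : (Fin n → ℝ) → ℝ) (l u y : Fin n → ℝ) (ε : ℝ) : ℝ :=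
  Real.sqrt (∑ i, (if InWS f l u y ε i then 0 else gradComp f y i) ^ 2)

/-- Euclidean norm on `Fin n → ℝ`. -/
def euclNorm {n : ℕ} (v : Fin n → ℝ) : ℝ :=
  Real.sqrt (∑ i, v i ^ 2)

end

/-! ### Auxiliary lemmas -/

lemma boxProj_eq_self {n : ℕ} {l u x : Fin n → ℝ} (h : ∀ i, l i ≤ x i ∧ x i ≤ u i) :
    boxProj l u x = x := by
  funext i
  simp only [boxProj, if_neg (not_lt.2 (h i).1), if_neg (not_lt.2 (h i).2)]

lemma projDir_eq_self {n : ℕ} {l u y : Fin n → ℝ} (p : Fin n → ℝ)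
    (h : ∀ i, l i < y i ∧ y i < u i) : projDir l u y p = p := by
  funext i
  refine if_neg ?_
  rintro (⟨h1, -⟩ | ⟨h1, -⟩)
  · exact absurd h1 (ne_of_gt (h i).1)
  · exact absurd h1 (ne_of_lt (h i).2)

lemma abs_le_euclNorm {n : ℕ} (p : Fin n → ℝ) (i : Fin n) : |p i| ≤ euclNorm p := by
  rw [← Real.sqrt_sq_eq_abs]
  exact Real.sqrt_le_sqrt (Finset.single_le_sum (f := fun j => p j ^ 2)
    (fun j _ => sq_nonneg _) (Finset.mem_univ i))

lemma boxPath_zero {n : ℕ} {l u : Fin n → ℝ} (x p : Fin n → ℝ)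
    (h : ∀ i, l i < x i ∧ x i < u i) : boxPath l u x p 0 = x := by
  unfold boxPath
  have hx : (fun i => x i + 0 * p i) = x := by funext i; ring
  rw [hx]
  exact boxProj_eq_self (fun i => ⟨(h i).1.le, (h i).2.le⟩)

lemma psiDp_zero {n : ℕ} (f : (Fin n → ℝ) → ℝ) {l u : Fin n → ℝ} (x p : Fin n → ℝ)
    (h : ∀ i, l i < x i ∧ x i < u i) : psiDp f l u x p 0 = fderiv ℝ f x p := by
  unfold psiDp
  rw [boxPath_zero x p h, projDir_eq_self p h]

lemma boxPath_interior {n : ℕ} {l u x p : Fin n → ℝ} {t : ℝ}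
    (h : ∀ i, l i < x i + t * p i ∧ x i + t * p i < u i) :
    boxPath l u x p t = fun i => x i + t * p i :=
  boxProj_eq_self (fun i => ⟨(h i).1.le, (h i).2.le⟩)

lemma projDirMinus_interior {n : ℕ} {l u x p : Fin n → ℝ} {t : ℝ}
    (h : ∀ i, l i < x i + t * p i ∧ x i + t * p i < u i) :
    projDirMinus l u x p t = p := by
  funext i
  have hnk : ¬ IsKink l u x p t i := by
    rintro (⟨h1, -⟩ | ⟨h1, -⟩)
    · exact absurd h1 (ne_of_gt (h i).1)
    · exact absurd h1 (ne_of_lt (h i).2)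
  unfold projDirMinus
  rw [if_neg hnk, boxPath_interior h, projDir_eq_self p h]

lemma psiDp_interior {n : ℕ} (f : (Fin n → ℝ) → ℝ) {l u x p : Fin n → ℝ} {t : ℝ}
    (h : ∀ i, l i < x i + t * p i ∧ x i + t * p i < u i) :
    psiDp f l u x p t = fderiv ℝ f (fun i => x i + t * p i) p := by
  unfold psiDp
  rw [boxPath_interior h, projDir_eq_self p h]

lemma psiDm_interior {n : ℕ} (f : (Fin n → ℝ) → ℝ) {l u x p : Fin n → ℝ} {t : ℝ}
    (h : ∀ i, l i < x i + t * p i ∧ x i + t * p i < u i) :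
    psiDm f l u x p t = fderiv ℝ f (fun i => x i + t * p i) p := by
  unfold psiDm
  rw [boxPath_interior h, projDirMinus_interior h]

/-- **Theorem 5.6: interior projected search with a quasi-Wolfe search.**
For iterates `v_{k+1} = proj_{Ω_k}(v_k + α_k Δv_k)` with
`Ω_k = {v : v_k − σ(v_k − ℓ) ≤ v ≤ v_k + σ(u − v_k)}` and `α_k` a quasi-Wolfe step
relative to the box `Ω_k`, `|∇M(v_k)ᵀΔv_k| → 0`. -/
theorem interior_quasi_wolfe {n : ℕ} (M : (Fin n → ℝ) → ℝ) (l u : Fin n → ℝ)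
    (σ ηA ηW θ : ℝ)
    (hlu : ∀ i, l i < u i)
    (hM : ContDiffOn ℝ 1 M {w : Fin n → ℝ | ∀ i, l i < w i ∧ w i < u i})
    (hσ : 0 < σ) (hσ1 : σ < 1)
    (hηA : 0 < ηA) (hAW : ηA < ηW) (hW1 : ηW < 1) (hθ : 0 < θ)
    (v dv : ℕ → Fin n → ℝ) (α : ℕ → ℝ)
    (hvB : ∀ k i, l i < v k i ∧ v k i < u i)
    (hcpt : IsCompact {w : Fin n → ℝ | (∀ i, l i < w i ∧ w i < u i) ∧ M w ≤ M (v 0)})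
    (hdesc : ∀ k, fderiv ℝ M (v k) (dv k) < 0)
    (hbd : ∀ k, euclNorm (dv k) ≤ θ)
    (hupd : ∀ k, v (k + 1) =
      boxPath (fun i => v k i - σ * (v k i - l i))
              (fun i => v k i + σ * (u i - v k i)) (v k) (dv k) (α k))
    (hQW : ∀ k, QuasiWolfeStep M (fun i => v k i - σ * (v k i - l i))
              (fun i => v k i + σ * (u i - v k i)) (v k) (dv k) ηA ηW (α k)) :
    Filter.Tendsto (fun k => |fderiv ℝ M (v k) (dv k)|) Filter.atTop (nhds 0) := by
  classical
  set L : Set (Fin n → ℝ) :=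
    {w : Fin n → ℝ | (∀ i, l i < w i ∧ w i < u i) ∧ M w ≤ M (v 0)} with hLdef
  have hBopen : IsOpen {w : Fin n → ℝ | ∀ i, l i < w i ∧ w i < u i} := by
    have hs : {w : Fin n → ℝ | ∀ i, l i < w i ∧ w i < u i}
        = Set.pi Set.univ (fun i => Set.Ioo (l i) (u i)) := by
      ext w; simp [Set.mem_pi, Set.mem_Ioo]
    rw [hs]
    exact isOpen_set_pi Set.finite_univ (fun i _ => isOpen_Ioo)
  have hαpos : ∀ k, 0 < α k := fun k => (hQW k).1
  have hbox : ∀ k i, v k i - σ * (v k i - l i) < v k i ∧ v k i < v k i + σ * (u i - v k i) := by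
    intro k i
    have h1 := (hvB k i).1
    have h2 := (hvB k i).2
    constructor <;> nlinarith
  have hdvle : ∀ k i, |dv k i| ≤ θ := fun k i => (abs_le_euclNorm (dv k) i).trans (hbd k)
  have hdvnorm : ∀ k, ‖dv k‖ ≤ θ := fun k =>
    (pi_norm_le_iff_of_nonneg hθ.le).2 (fun i => hdvle k i)
  have hpath0 : ∀ k, boxPath (fun i => v k i - σ * (v k i - l i))
      (fun i => v k i + σ * (u i - v k i)) (v k) (dv k) 0 = v k :=
    fun k => boxPath_zero (v k) (dv k) (hbox k)
  have hpsi0 : ∀ k, psiDp M (fun i => v k i - σ * (v k i - l i))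
      (fun i => v k i + σ * (u i - v k i)) (v k) (dv k) 0 = fderiv ℝ M (v k) (dv k) :=
    fun k => psiDp_zero M (v k) (dv k) (hbox k)
  have hdec : ∀ k, M (v (k+1)) ≤ M (v k) + α k * ηA * fderiv ℝ M (v k) (dv k) := by
    intro k
    have h := (hQW k).2.1
    rw [hpath0 k, hpsi0 k, ← hupd k] at h
    exact h
  have hlt : ∀ k, M (v (k+1)) < M (v k) := by
    intro k
    have hneg : α k * ηA * fderiv ℝ M (v k) (dv k) < 0 :=
      mul_neg_of_pos_of_neg (mul_pos (hαpos k) hηA) (hdesc k)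
    linarith [hdec k]
  have hanti : Antitone (fun k => M (v k)) :=
    antitone_nat_of_succ_le (fun k => (hlt k).le)
  have hvL : ∀ k, v k ∈ L := fun k => ⟨hvB k, hanti (Nat.zero_le k)⟩
  have hLB : L ⊆ {w : Fin n → ℝ | ∀ i, l i < w i ∧ w i < u i} := fun w hw => hw.1
  -- lower bound for M on the level set
  obtain ⟨w0, hw0L, hw0min⟩ := hcpt.exists_isMinOn ⟨v 0, hvL 0⟩ (hM.continuousOn.mono hLB)
  have hbdd : BddBelow (Set.range fun k => M (v k)) := by
    refine ⟨M w0, ?_⟩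
    rintro x ⟨k, rfl⟩
    exact hw0min (hvL k)
  have hMten : Filter.Tendsto (fun k => M (v k)) Filter.atTop (nhds (⨅ k, M (v k))) :=
    tendsto_atTop_ciInf hanti hbdd
  have hdiff0 : Filter.Tendsto (fun k => M (v k) - M (v (k+1))) Filter.atTop (nhds 0) := by
    have h2 : Filter.Tendsto (fun k => M (v (k+1))) Filter.atTop (nhds (⨅ k, M (v k))) :=
      hMten.comp (Filter.tendsto_add_atTop_nat 1)
    simpa using hMten.sub h2
  have hh0 : Filter.Tendsto (fun k => α k * (-(fderiv ℝ M (v k) (dv k))))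
      Filter.atTop (nhds 0) := by
    have hsq : Filter.Tendsto (fun k => ηA * (α k * (-(fderiv ℝ M (v k) (dv k)))))
        Filter.atTop (nhds 0) := by
      refine squeeze_zero (fun k => ?_) (fun k => ?_) hdiff0
      · have h1 := hαpos k
        have h2 := hdesc k
        exact mul_nonneg hηA.le (mul_nonneg h1.le (by linarith))
      · have h1 := hdec k
        nlinarith
    have h3 := hsq.const_mul ηA⁻¹
    rw [mul_zero] at h3
    refine h3.congr (fun k => ?_)
    rw [← mul_assoc, inv_mul_cancel₀ hηA.ne', one_mul]
  -- margin of the level set inside the open box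
  obtain ⟨δ0, hδ0, hthick⟩ := hcpt.exists_thickening_subset_open hBopen hLB
  set δ := δ0 / 2 with hδdef
  have hδpos : 0 < δ := by positivity
  have hmargin : ∀ w ∈ L, ∀ i, l i + δ ≤ w i ∧ w i ≤ u i - δ := by
    intro w hw i
    have hup : ∀ c : ℝ, |c| < δ0 →
        (∀ j, l j < Function.update w i (w i + c) j ∧ Function.update w i (w i + c) j < u j) := by
      intro c hc
      have hmem : Function.update w i (w i + c) ∈ Metric.thickening δ0 L := by
        rw [Metric.mem_thickening_iff]
        refine ⟨w, hw, ?_⟩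
        rw [dist_pi_lt_iff hδ0]
        intro j
        rcases eq_or_ne j i with rfl | hj
        · rw [Function.update_self]
          simpa [Real.dist_eq] using hc
        · rw [Function.update_of_ne hj]
          simpa using hδ0
      exact hthick hmem
    constructor
    · have h1 := (hup (-δ) (by rw [abs_of_neg (by linarith : (-δ : ℝ) < 0)]; linarith) i).1
      rw [Function.update_self] at h1
      linarith
    · have h1 := (hup δ (by rw [abs_of_pos hδpos]; linarith) i).2
      rw [Function.update_self] at h1
      linarith
  -- uniform continuity of the gradient on a compact slab
  set K : Set (Fin n → ℝ) :=
    {w : Fin n → ℝ | ∀ i, w i ∈ Set.Icc (l i + δ / 2) (u i - δ / 2)} with hKdef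
  have hKcpt : IsCompact K := by
    have hs : K = Set.pi Set.univ (fun i => Set.Icc (l i + δ / 2) (u i - δ / 2)) := by
      ext w; simp [hKdef, Set.mem_pi, Set.mem_Icc, Pi.le_def, forall_and]
    rw [hs]
    exact isCompact_univ_pi (fun i => isCompact_Icc)
  have hKB : K ⊆ {w : Fin n → ℝ | ∀ i, l i < w i ∧ w i < u i} := by
    intro w hw i
    obtain ⟨h1, h2⟩ := hw i
    exact ⟨by linarith, by linarith⟩
  have hfderiv_cont : ContinuousOn (fun w => fderiv ℝ M w)
      {w : Fin n → ℝ | ∀ i, l i < w i ∧ w i < u i} :=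
    hM.continuousOn_fderiv_of_isOpen hBopen le_rfl
  have huc := hKcpt.uniformContinuousOn_of_continuous (hfderiv_cont.mono hKB)
  rw [Metric.uniformContinuousOn_iff] at huc
  -- contradiction argument
  have habs : (fun k => |fderiv ℝ M (v k) (dv k)|)
      = fun k => -(fderiv ℝ M (v k) (dv k)) := by
    funext k; exact abs_of_neg (hdesc k)
  rw [habs]
  by_contra hcon
  rw [Metric.tendsto_atTop] at hcon
  push_neg at hcon
  obtain ⟨ε, hε, hfreq⟩ := hcon
  have h1W : 0 < 1 - ηW := by linarith
  set ε' := (1 - ηW) * ε / (2 * θ) with hε'def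
  have hε'pos : 0 < ε' := div_pos (mul_pos h1W hε) (by positivity)
  obtain ⟨δ', hδ', hucδ⟩ := huc ε' hε'pos
  set r := min (σ * δ) (min (δ / 2) δ') with hrdef
  have hrpos : 0 < r := lt_min (by positivity) (lt_min (by positivity) hδ')
  have hev : ∀ᶠ k in Filter.atTop,
      α k * (-(fderiv ℝ M (v k) (dv k))) < ε * (r / θ) :=
    hh0.eventually_lt_const (by positivity)
  obtain ⟨N, hN⟩ := Filter.eventually_atTop.1 hev
  obtain ⟨k, hkN, hkε⟩ := hfreq N
  rw [dist_zero_right, Real.norm_eq_abs,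
    abs_of_pos (neg_pos.2 (hdesc k))] at hkε
  -- now derive the contradiction at index k
  have hαk := hαpos k
  have hαsmall : α k * θ < r := by
    have h1 : α k * ε ≤ α k * (-(fderiv ℝ M (v k) (dv k))) :=
      mul_le_mul_of_nonneg_left hkε hαk.le
    have h2 := hN k hkN
    have h3 : α k < r / θ := by
      by_contra hle
      push_neg at hle
      have h4 : ε * (r / θ) ≤ ε * α k := mul_le_mul_of_nonneg_left hle hε.le
      rw [mul_comm] at h4
      linarith
    calc α k * θ < (r / θ) * θ := mul_lt_mul_of_pos_right h3 hθ
      _ = r := div_mul_cancel₀ r hθ.ne'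
  have hr1 : α k * θ < σ * δ := lt_of_lt_of_le hαsmall (min_le_left _ _)
  have hr2 : α k * θ < δ / 2 :=
    lt_of_lt_of_le hαsmall (le_trans (min_le_right _ _) (min_le_left _ _))
  have hr3 : α k * θ < δ' :=
    lt_of_lt_of_le hαsmall (le_trans (min_le_right _ _) (min_le_right _ _))
  have hαdv : ∀ i, |α k * dv k i| ≤ α k * θ := by
    intro i
    rw [abs_mul, abs_of_pos hαk]
    exact mul_le_mul_of_nonneg_left (hdvle k i) hαk.le
  have hxin : ∀ i, v k i - σ * (v k i - l i) < v k i + α k * dv k i ∧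
      v k i + α k * dv k i < v k i + σ * (u i - v k i) := by
    intro i
    have hm := hmargin (v k) (hvL k) i
    have hσδ1 : σ * δ ≤ σ * (v k i - l i) :=
      mul_le_mul_of_nonneg_left (by linarith [hm.1]) hσ.le
    have hσδ2 : σ * δ ≤ σ * (u i - v k i) :=
      mul_le_mul_of_nonneg_left (by linarith [hm.2]) hσ.le
    have h5 := abs_le.1 (hαdv i)
    constructor <;> linarith [h5.1, h5.2]
  have hDm : psiDm M (fun i => v k i - σ * (v k i - l i))
      (fun i => v k i + σ * (u i - v k i)) (v k) (dv k) (α k)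
      = fderiv ℝ M (fun i => v k i + α k * dv k i) (dv k) := psiDm_interior M hxin
  have hDp : psiDp M (fun i => v k i - σ * (v k i - l i))
      (fun i => v k i + σ * (u i - v k i)) (v k) (dv k) (α k)
      = fderiv ℝ M (fun i => v k i + α k * dv k i) (dv k) := psiDp_interior M hxin
  have hcurv : ηW * fderiv ℝ M (v k) (dv k)
      ≤ fderiv ℝ M (fun i => v k i + α k * dv k i) (dv k) := by
    rcases (hQW k).2.2 with h | h | h
    · rw [hDm, hpsi0 k, abs_of_neg (hdesc k)] at h
      have h6 := neg_abs_le (fderiv ℝ M (fun i => v k i + α k * dv k i) (dv k))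
      linarith
    · rw [hDp, hpsi0 k, abs_of_neg (hdesc k)] at h
      have h6 := neg_abs_le (fderiv ℝ M (fun i => v k i + α k * dv k i) (dv k))
      linarith
    · exfalso
      rw [hDm, hDp] at h
      exact h.1 rfl
  have hvK : v k ∈ K := by
    intro i
    have hm := hmargin (v k) (hvL k) i
    exact ⟨by linarith [hm.1], by linarith [hm.2]⟩
  have hxK : (fun i => v k i + α k * dv k i) ∈ K := by
    intro i
    have hm := hmargin (v k) (hvL k) i
    have h5 := abs_le.1 (hαdv i)
    exact ⟨by linarith [h5.1, hm.1], by linarith [h5.2, hm.2]⟩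
  have hdistx : dist (fun i => v k i + α k * dv k i) (v k) < δ' := by
    refine lt_of_le_of_lt ?_ hr3
    rw [dist_pi_le_iff (by positivity)]
    intro i
    rw [Real.dist_eq]
    have h7 : v k i + α k * dv k i - v k i = α k * dv k i := by ring
    rw [h7]
    exact hαdv i
  have hUC := hucδ _ hxK _ hvK hdistx
  rw [dist_eq_norm] at hUC
  have hsub : fderiv ℝ M (fun i => v k i + α k * dv k i) (dv k)
        - fderiv ℝ M (v k) (dv k)
      ≤ ‖fderiv ℝ M (fun i => v k i + α k * dv k i) - fderiv ℝ M (v k)‖ * θ := by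
    calc fderiv ℝ M (fun i => v k i + α k * dv k i) (dv k) - fderiv ℝ M (v k) (dv k)
        = (fderiv ℝ M (fun i => v k i + α k * dv k i) - fderiv ℝ M (v k)) (dv k) := by
          rw [ContinuousLinearMap.sub_apply]
      _ ≤ ‖(fderiv ℝ M (fun i => v k i + α k * dv k i) - fderiv ℝ M (v k)) (dv k)‖ :=
          le_abs_self _
      _ ≤ ‖fderiv ℝ M (fun i => v k i + α k * dv k i) - fderiv ℝ M (v k)‖ * ‖dv k‖ :=
          ContinuousLinearMap.le_opNorm _ _
      _ ≤ ‖fderiv ℝ M (fun i => v k i + α k * dv k i) - fderiv ℝ M (v k)‖ * θ :=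
          mul_le_mul_of_nonneg_left (hdvnorm k) (norm_nonneg _)
  have hlast : ‖fderiv ℝ M (fun i => v k i + α k * dv k i) - fderiv ℝ M (v k)‖ * θ
      < ε' * θ := mul_lt_mul_of_pos_right hUC hθ
  have hεθ : ε' * θ = (1 - ηW) * ε / 2 := by
    rw [hε'def]
    field_simp
  have hchain1 : (1 - ηW) * ε ≤ (1 - ηW) * (-(fderiv ℝ M (v k) (dv k))) :=
    mul_le_mul_of_nonneg_left hkε h1W.le
  have hchain2 : (1 - ηW) * (-(fderiv ℝ M (v k) (dv k)))
      ≤ fderiv ℝ M (fun i => v k i + α k * dv k i) (dv k) - fderiv ℝ M (v k) (dv k) := by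
    have hring : (1 - ηW) * (-(fderiv ℝ M (v k) (dv k)))
        = ηW * fderiv ℝ M (v k) (dv k) - fderiv ℝ M (v k) (dv k) := by ring
    rw [hring]
    linarith [hcurv]
  have hpos : 0 < (1 - ηW) * ε := mul_pos h1W hε
  linarith [hchain1, hchain2, hsub, hlast, hεθ, hpos]
end

section
/- Let f : ℝⁿ → ℝ be continuously differentiable, let Ω be the box with projection proj_Ω, let x ∈ Ω, p ∈ ℝⁿ, and set x(α) = proj_Ω(x + αp) and ψ(α) = f(x(α)). Then for every α > 0, the left derivative of ψ at α exists and equals ∇f(x(α))ᵀP⁻_{x(α)}(p); that is, the derivative of ψ within the interval (−∞, α] at α exists and equals ∇f(x(α))ᵀP⁻_{x(α)}(p). -/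
open scoped Classical

open Filter Topology in
private lemma comp_left_deriv {n : ℕ} (l u x p : Fin n → ℝ)
    (hlu : ∀ i, l i ≤ u i) (hx : ∀ i, l i ≤ x i ∧ x i ≤ u i)
    (α : ℝ) (hα : 0 < α) (i : Fin n) :
    HasDerivWithinAt (fun β => boxPath l u x p β i)
      (projDirMinus l u x p α i) (Set.Iic α) α := by
  have hlin : HasDerivWithinAt (fun β : ℝ => x i + β * p i) (p i) (Set.Iic α) α :=
    ((hasDerivAt_mul_const (p i)).const_add (x i)).hasDerivWithinAt
  have hcont : Continuous (fun β : ℝ => x i + β * p i) := by continuity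
  by_cases hq : p i = 0
  · have hval : projDirMinus l u x p α i = 0 := by
      simp [projDirMinus, IsKink, projDir, hq]
    rw [hval]
    have hconst : (fun β : ℝ => boxPath l u x p β i) =
        fun _ : ℝ => boxProj l u x i := by
      funext β; simp [boxPath, boxProj, hq]
    rw [hconst]
    exact hasDerivWithinAt_const α _ _
  · rcases lt_trichotomy (x i + α * p i) (l i) with hB | hD | h1
    · -- below the lower bound: constant l i
      have hq' : p i < 0 := by nlinarith [(hx i).1]
      have hy : boxPath l u x p α i = l i := by
        simp [boxPath, boxProj, hB]
      have hval : projDirMinus l u x p α i = 0 := by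
        simp [projDirMinus, IsKink, projDir, hy, hB.ne, (by linarith [hlu i] : x i + α * p i ≠ u i), (by linarith [hlu i] : ¬ u i < x i + α * p i), hq']
      rw [hval]
      have hev : ∀ᶠ β in 𝓝 α, x i + β * p i < l i :=
        eventually_of_mem ((isOpen_lt hcont continuous_const).mem_nhds hB) fun β hβ => hβ
      refine (hasDerivWithinAt_const α _ (l i)).congr_of_eventuallyEq ?_ hy
      filter_upwards [hev.filter_mono nhdsWithin_le_nhds] with β hβ
      simp [boxPath, boxProj, hβ]
    · -- kink at the lower bound
      have hxl : l i < x i := by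
        rcases eq_or_lt_of_le (hx i).1 with h | h
        · exfalso; apply hq; nlinarith
        · exact h
      have hq' : p i < 0 := by nlinarith
      have htu : x i + α * p i < u i := by linarith [(hx i).2]
      have hval : projDirMinus l u x p α i = p i := by
        simp [projDirMinus, IsKink, hD, hq']
      rw [hval]
      have hev : ∀ᶠ β in 𝓝 α, x i + β * p i < u i :=
        eventually_of_mem ((isOpen_lt hcont continuous_const).mem_nhds htu) fun β hβ => hβ
      refine hlin.congr_of_eventuallyEq ?_ (by simp [boxPath, boxProj, hD, not_lt.2 (hlu i), le_refl])
      filter_upwards [hev.filter_mono nhdsWithin_le_nhds, self_mem_nhdsWithin] with β h1 h2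
      have hge : l i ≤ x i + β * p i := by
        have : α * p i ≤ β * p i := mul_le_mul_of_nonpos_right h2 hq'.le
        linarith
      simp [boxPath, boxProj, not_lt.2 hge, not_lt.2 h1.le]
    · rcases lt_trichotomy (x i + α * p i) (u i) with hA | hE | hC
      · -- strictly inside: identity
        have hy : boxPath l u x p α i = x i + α * p i := by
          simp [boxPath, boxProj, not_lt.2 h1.le, not_lt.2 hA.le]
        have hval : projDirMinus l u x p α i = p i := by
          simp [projDirMinus, IsKink, projDir, hy, h1.ne', hA.ne]
        rw [hval]
        have hev1 : ∀ᶠ β in 𝓝 α, l i < x i + β * p i :=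
          eventually_of_mem ((isOpen_lt continuous_const hcont).mem_nhds h1) fun β hβ => hβ
        have hev2 : ∀ᶠ β in 𝓝 α, x i + β * p i < u i :=
          eventually_of_mem ((isOpen_lt hcont continuous_const).mem_nhds hA) fun β hβ => hβ
        refine hlin.congr_of_eventuallyEq ?_ hy
        filter_upwards [hev1.filter_mono nhdsWithin_le_nhds,
          hev2.filter_mono nhdsWithin_le_nhds] with β h1' h2'
        simp [boxPath, boxProj, not_lt.2 h1'.le, not_lt.2 h2'.le]
      · -- kink at the upper bound
        have hxu : x i < u i := by
          rcases eq_or_lt_of_le (hx i).2 with h | h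
          · exfalso; apply hq; nlinarith
          · exact h
        have hq' : 0 < p i := by nlinarith
        have hval : projDirMinus l u x p α i = p i := by
          simp [projDirMinus, IsKink, hE, hq']
        rw [hval]
        have hev : ∀ᶠ β in 𝓝 α, l i < x i + β * p i :=
          eventually_of_mem ((isOpen_lt continuous_const hcont).mem_nhds h1) fun β hβ => hβ
        refine hlin.congr_of_eventuallyEq ?_
          (by simp [boxPath, boxProj, hE, not_lt.2 h1.le, (hlu i).not_gt])
        filter_upwards [hev.filter_mono nhdsWithin_le_nhds, self_mem_nhdsWithin] with β h1' h2
        have hle : x i + β * p i ≤ u i := by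
          have : β * p i ≤ α * p i := mul_le_mul_of_nonneg_right h2 hq'.le
          linarith
        simp [boxPath, boxProj, not_lt.2 h1'.le, not_lt.2 hle]
      · -- above the upper bound: constant u i
        have hq' : 0 < p i := by nlinarith [(hx i).2]
        have hy : boxPath l u x p α i = u i := by
          simp [boxPath, boxProj, not_lt.2 (by linarith [hlu i] : l i ≤ x i + α * p i), hC]
        have hval : projDirMinus l u x p α i = 0 := by
          simp [projDirMinus, IsKink, projDir, hy, hC.ne', hq',
            (by linarith [hlu i] : ¬ x i + α * p i = l i)]
        rw [hval]
        have hev : ∀ᶠ β in 𝓝 α, u i < x i + β * p i :=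
          eventually_of_mem ((isOpen_lt continuous_const hcont).mem_nhds hC) fun β hβ => hβ
        refine (hasDerivWithinAt_const α _ (u i)).congr_of_eventuallyEq ?_ hy
        filter_upwards [hev.filter_mono nhdsWithin_le_nhds] with β hβ
        have : ¬ x i + β * p i < l i := by linarith [hlu i]
        simp [boxPath, boxProj, this, hβ]

/-- **Left derivative of the search function** (Section 3.2): for `f` continuously
differentiable, feasible `x` and `α > 0`, `ψ(β) = f(proj_Ω(x + βp))` has left
derivative `∇f(x(α))ᵀP⁻_{x(α)}(p)` at `α`. -/
theorem psi_left_deriv {n : ℕ} (f : (Fin n → ℝ) → ℝ) (l u x p : Fin n → ℝ)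
    (hf : ContDiff ℝ 1 f)
    (hlu : ∀ i, l i ≤ u i) (hx : ∀ i, l i ≤ x i ∧ x i ≤ u i)
    (α : ℝ) (hα : 0 < α) :
    HasDerivWithinAt (fun β => f (boxPath l u x p β))
      (psiDm f l u x p α) (Set.Iic α) α :=  by
  have hpath : HasDerivWithinAt (fun β => boxPath l u x p β)
      (projDirMinus l u x p α) (Set.Iic α) α :=
    hasDerivWithinAt_pi.2 fun i => comp_left_deriv l u x p hlu hx α hα i
  have hdf := (hf.differentiable one_ne_zero (boxPath l u x p α)).hasFDerivAt
  exact hdf.comp_hasDerivWithinAt α hpath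
end
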